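/- The simulation translation (-)^t from the monotone μ-calculus into the normal bimodal μ-calculus preserves satisfiability and validity: for every sentence C ∈ L^μ_NF, (1) if C is satisfiable in some game model then C^t is satisfiable in some Kripke model for L^{2μ}_NF, and (2) if C is valid over all game models then C^t is valid over all Kripke models for L^{2μ}_NF. -/

import Mathlib

/-! Game models (monotone neighbourhood models via effectivity functions),
    and Knaster-Tarski least/greatest fixed points of set operators. -/

structure GameModel where
  S : Type
  E : ℕ → Set S → Set S
  mono : ∀ g, Monotone (E g)
  V : ℕ → Set S

def lfpSet {σ : Type} (f : Set σ → Set σ) : Set σ := sInf {X | f X ⊆ X}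
def gfpSet {σ : Type} (f : Set σ → Set σ) : Set σ := sSup {X | X ⊆ f X}

/-! The monotone μ-calculus: syntax (in negation normal form), over a type `V`
    of fixpoint variables.  `dia g` is `⟨g⟩` and `box g` is `⟨g^d⟩`. -/

inductive MuForm (V : Type) : Type where
  | atom  : ℕ → MuForm V
  | natom : ℕ → MuForm V
  | var   : V → MuForm V
  | or    : MuForm V → MuForm V → MuForm V
  | and   : MuForm V → MuForm V → MuForm V
  | dia   : ℕ → MuForm V → MuForm V
  | box   : ℕ → MuForm V → MuForm V
  | mu    : V → MuForm V → MuForm V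
  | nu    : V → MuForm V → MuForm V

variable {V : Type}

/-- Free variables. -/
def MuForm.FV : MuForm V → Set V
  | .atom _  => ∅
  | .natom _ => ∅
  | .var x   => {x}
  | .or A B  => MuForm.FV A ∪ MuForm.FV B
  | .and A B => MuForm.FV A ∪ MuForm.FV B
  | .dia _ A => MuForm.FV A
  | .box _ A => MuForm.FV A
  | .mu x A  => MuForm.FV A \ {x}
  | .nu x A  => MuForm.FV A \ {x}

/-- All variables occurring (free or bound) in a formula. -/
def MuForm.vars : MuForm V → Set V
  | .atom _  => ∅
  | .natom _ => ∅
  | .var x   => {x}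
  | .or A B  => MuForm.vars A ∪ MuForm.vars B
  | .and A B => MuForm.vars A ∪ MuForm.vars B
  | .dia _ A => MuForm.vars A
  | .box _ A => MuForm.vars A
  | .mu x A  => insert x (MuForm.vars A)
  | .nu x A  => insert x (MuForm.vars A)

/-- `MuForm.Sub B A` : `B` is a subformula of `A` (reflexively). -/
def MuForm.Sub : MuForm V → MuForm V → Prop
  | B, .atom p  => B = .atom p
  | B, .natom p => B = .natom p
  | B, .var x   => B = .var x
  | B, .or A₁ A₂  => B = .or A₁ A₂ ∨ MuForm.Sub B A₁ ∨ MuForm.Sub B A₂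
  | B, .and A₁ A₂ => B = .and A₁ A₂ ∨ MuForm.Sub B A₁ ∨ MuForm.Sub B A₂
  | B, .dia g A => B = .dia g A ∨ MuForm.Sub B A
  | B, .box g A => B = .box g A ∨ MuForm.Sub B A
  | B, .mu x A  => B = .mu x A ∨ MuForm.Sub B A
  | B, .nu x A  => B = .nu x A ∨ MuForm.Sub B A

/-- `x <_C y` : `x` occurs freely in some subformula `σy.B` of `C`. -/
def ltV (C : MuForm V) (x y : V) : Prop :=
  ∃ B : MuForm V, (MuForm.Sub (.mu y B) C ∨ MuForm.Sub (.nu y B) C) ∧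
    x ∈ MuForm.FV (MuForm.mu y B)

/-- `≤_C` : the reflexive-transitive closure of `<_C`. -/
def leV (C : MuForm V) : V → V → Prop := Relation.ReflTransGen (ltV C)

/-- Local well-namedness: the transitive closure of `<_C` is irreflexive. -/
def LocallyWellNamed (C : MuForm V) : Prop := Irreflexive (Relation.TransGen (ltV C))

/-- Substitution of the formula `B` for the variable `x` (not binding-aware below
    binders of `x` itself). -/
def MuForm.subst [DecidableEq V] (x : V) (B : MuForm V) : MuForm V → MuForm V
  | .atom p  => .atom p
  | .natom p => .natom p
  | .var y   => if y = x then B else .var y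
  | .or A₁ A₂  => .or (MuForm.subst x B A₁) (MuForm.subst x B A₂)
  | .and A₁ A₂ => .and (MuForm.subst x B A₁) (MuForm.subst x B A₂)
  | .dia g A => .dia g (MuForm.subst x B A)
  | .box g A => .box g (MuForm.subst x B A)
  | .mu y A  => if y = x then .mu y A else .mu y (MuForm.subst x B A)
  | .nu y A  => if y = x then .nu y A else .nu y (MuForm.subst x B A)

/-! Semantics of the monotone μ-calculus over game models, relative to an
    assignment of the fixpoint variables. -/

def MuForm.mng (M : GameModel) [DecidableEq V] : MuForm V → (V → Set M.S) → Set M.S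
  | .atom p, _  => M.V p
  | .natom p, _ => (M.V p)ᶜ
  | .var x, h   => h x
  | .or A B, h  => MuForm.mng M A h ∪ MuForm.mng M B h
  | .and A B, h => MuForm.mng M A h ∩ MuForm.mng M B h
  | .dia g A, h => M.E g (MuForm.mng M A h)
  | .box g A, h => (M.E g (MuForm.mng M A h)ᶜ)ᶜ
  | .mu x A, h  => lfpSet (fun X => MuForm.mng M A (Function.update h x X))
  | .nu x A, h  => gfpSet (fun X => MuForm.mng M A (Function.update h x X))

/-! The normal bimodal μ-calculus L^{2μ}_NF over labels `g_N, g_∋` (encoded as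
    `(g, true)` and `(g, false)`), its Kripke semantics, and the simulation
    translation `(-)^t` from the monotone μ-calculus. -/

/-- Labels: `(g, true)` is `g_N`, `(g, false)` is `g_∋`. -/
abbrev Lab := ℕ × Bool

inductive Mu2 (V : Type) : Type where
  | atom  : ℕ → Mu2 V
  | natom : ℕ → Mu2 V
  | var   : V → Mu2 V
  | or    : Mu2 V → Mu2 V → Mu2 V
  | and   : Mu2 V → Mu2 V → Mu2 V
  | dia   : Lab → Mu2 V → Mu2 V
  | box   : Lab → Mu2 V → Mu2 V
  | mu    : V → Mu2 V → Mu2 V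
  | nu    : V → Mu2 V → Mu2 V

/-- Kripke models for the bimodal language. -/
structure Kripke where
  W : Type
  R : Lab → W → W → Prop
  V : ℕ → Set W

def Mu2.mng {V : Type} [DecidableEq V] (K : Kripke) : Mu2 V → (V → Set K.W) → Set K.W
  | .atom p, _  => K.V p
  | .natom p, _ => (K.V p)ᶜ
  | .var x, h   => h x
  | .or A B, h  => Mu2.mng K A h ∪ Mu2.mng K B h
  | .and A B, h => Mu2.mng K A h ∩ Mu2.mng K B h
  | .dia l A, h => {w | ∃ u, K.R l w u ∧ u ∈ Mu2.mng K A h}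
  | .box l A, h => {w | ∀ u, K.R l w u → u ∈ Mu2.mng K A h}
  | .mu x A, h  => lfpSet (fun X => Mu2.mng K A (Function.update h x X))
  | .nu x A, h  => gfpSet (fun X => Mu2.mng K A (Function.update h x X))

/-- The simulation translation `(-)^t : L^μ_NF → L^{2μ}_NF`. -/
def ttr {V : Type} : MuForm V → Mu2 V
  | .atom p  => .atom p
  | .natom p => .natom p
  | .var x   => .var x
  | .or A B  => .or (ttr A) (ttr B)
  | .and A B => .and (ttr A) (ttr B)
  | .dia g A => .dia (g, true) (.box (g, false) (ttr A))
  | .box g A => .box (g, true) (.dia (g, false) (ttr A))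
  | .mu x A  => .mu x (ttr A)
  | .nu x A  => .nu x (ttr A)

/-! Auxiliary lemmas -/

lemma lfpSet_le {σ : Type} {f : Set σ → Set σ} {Y : Set σ} (h : f Y ⊆ Y) :
    lfpSet f ⊆ Y := sInf_le h

lemma le_lfpSet {σ : Type} {f : Set σ → Set σ} {T : Set σ}
    (h : ∀ Y, f Y ⊆ Y → T ⊆ Y) : T ⊆ lfpSet f := le_sInf h

lemma le_gfpSet {σ : Type} {f : Set σ → Set σ} {Y : Set σ} (h : Y ⊆ f Y) :
    Y ⊆ gfpSet f := le_sSup h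

lemma gfpSet_le {σ : Type} {f : Set σ → Set σ} {T : Set σ}
    (h : ∀ Y, Y ⊆ f Y → Y ⊆ T) : gfpSet f ⊆ T := sSup_le h

lemma lfpSet_prefix {σ : Type} {f : Set σ → Set σ} (hf : Monotone f) :
    f (lfpSet f) ⊆ lfpSet f := by
  apply le_lfpSet
  intro Y hY
  exact (hf (lfpSet_le hY)).trans hY

lemma gfpSet_postfix {σ : Type} {f : Set σ → Set σ} (hf : Monotone f) :
    gfpSet f ⊆ f (gfpSet f) := by
  apply gfpSet_le
  intro Y hY
  exact hY.trans (hf (le_gfpSet hY))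

lemma lfpSet_mono {σ : Type} {f g : Set σ → Set σ} (h : ∀ X, f X ⊆ g X) :
    lfpSet f ⊆ lfpSet g := by
  apply le_lfpSet
  intro Y hY
  exact lfpSet_le ((h Y).trans hY)

lemma gfpSet_mono {σ : Type} {f g : Set σ → Set σ} (h : ∀ X, f X ⊆ g X) :
    gfpSet f ⊆ gfpSet g := by
  apply gfpSet_le
  intro Y hY
  exact le_gfpSet (hY.trans (h Y))

/-- Monotonicity of Kripke semantics in the assignment. -/
lemma Mu2.mng_mono {V : Type} [DecidableEq V] (K : Kripke) (A : Mu2 V) :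
    ∀ (h h' : V → Set K.W), (∀ x, h x ⊆ h' x) → Mu2.mng K A h ⊆ Mu2.mng K A h' := by
  induction A with
  | atom p => intro h h' _; simp [Mu2.mng]
  | natom p => intro h h' _; simp [Mu2.mng]
  | var x => intro h h' hle; exact hle x
  | or A B ihA ihB =>
      intro h h' hle
      exact Set.union_subset_union (ihA h h' hle) (ihB h h' hle)
  | and A B ihA ihB =>
      intro h h' hle
      exact Set.inter_subset_inter (ihA h h' hle) (ihB h h' hle)
  | dia l A ih =>
      intro h h' hle w hw
      obtain ⟨u, hru, hu⟩ := hw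
      exact ⟨u, hru, ih h h' hle hu⟩
  | box l A ih =>
      intro h h' hle w hw u hru
      exact ih h h' hle (hw u hru)
  | mu x A ih =>
      intro h h' hle
      apply lfpSet_mono
      intro X
      apply ih
      intro y
      by_cases hy : y = x
      · subst hy; simp
      · simp [Function.update_of_ne hy]; exact hle y
  | nu x A ih =>
      intro h h' hle
      apply gfpSet_mono
      intro X
      apply ih
      intro y
      by_cases hy : y = x
      · subst hy; simp
      · simp [Function.update_of_ne hy]; exact hle y

/-- The Kripke model obtained from a game model: worlds are states together
    with neighbourhoods. -/
def simK (M : GameModel) : Kripke where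
  W := M.S ⊕ Set M.S
  R := fun l w u =>
    match w, u with
    | Sum.inl s, Sum.inr U => l.2 = true ∧ s ∈ M.E l.1 U
    | Sum.inr U, Sum.inl t => l.2 = false ∧ t ∈ U
    | _, _ => False
  V := fun p => Sum.inl '' M.V p

/-- Key simulation lemma: the `inl`-part of the Kripke meaning of `ttr A`
    coincides with the game-model meaning of `A`. -/
lemma sim_mng (M : GameModel) (A : MuForm ℕ) :
    ∀ (h : ℕ → Set M.S) (h' : ℕ → Set (simK M).W),
      (∀ x, Sum.inl ⁻¹' h' x = h x) →
      Sum.inl ⁻¹' (Mu2.mng (simK M) (ttr A) h') = MuForm.mng M A h := by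
  induction A with
  | atom p =>
      intro h h' _
      simp only [ttr, Mu2.mng, MuForm.mng, simK]
      exact Set.preimage_image_eq _ Sum.inl_injective
  | natom p =>
      intro h h' _
      simp only [ttr, Mu2.mng, MuForm.mng, simK, Set.preimage_compl]
      rw [Set.preimage_image_eq _ Sum.inl_injective]
  | var x => intro h h' hh; exact hh x
  | or A B ihA ihB =>
      intro h h' hh
      simp only [ttr, Mu2.mng, MuForm.mng, Set.preimage_union, ihA h h' hh, ihB h h' hh]
      exact congrArg₂ (· ∪ ·) (ihA h h' hh) (ihB h h' hh)
  | and A B ihA ihB =>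
      intro h h' hh
      simp only [ttr, Mu2.mng, MuForm.mng, Set.preimage_inter, ihA h h' hh, ihB h h' hh]
      exact congrArg₂ (· ∩ ·) (ihA h h' hh) (ihB h h' hh)
  | dia g A ih =>
      intro h h' hh
      have ihe := ih h h' hh
      ext s
      simp only [ttr, Mu2.mng, MuForm.mng, Set.mem_preimage, Set.mem_setOf_eq]
      constructor
      · rintro ⟨u, hru, hbox⟩
        rcases u with t | U
        · exact absurd hru (by simp [simK])
        · obtain ⟨-, hsE⟩ : (g, true).2 = true ∧ s ∈ M.E (g, true).1 U := hru
          have hsub : U ⊆ MuForm.mng M A h := by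
            intro t ht
            have : (Sum.inl t : (simK M).W) ∈ Mu2.mng (simK M) (ttr A) h' :=
              hbox (Sum.inl t) ⟨rfl, ht⟩
            rw [← ihe]; exact this
          exact M.mono g hsub hsE
      · intro hs
        refine ⟨Sum.inr (MuForm.mng M A h), ⟨rfl, hs⟩, ?_⟩
        rintro (t | U) hrv
        · obtain ⟨-, ht⟩ : (g, false).2 = false ∧ t ∈ MuForm.mng M A h := hrv
          rw [← ihe] at ht; exact ht
        · exact absurd hrv (by simp [simK])
  | box g A ih =>
      intro h h' hh
      have ihe := ih h h' hh
      ext s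
      simp only [ttr, Mu2.mng, MuForm.mng, Set.mem_preimage, Set.mem_setOf_eq,
        Set.mem_compl_iff]
      constructor
      · intro hall hsE
        obtain ⟨v, hrv, hv⟩ := hall (Sum.inr (MuForm.mng M A h)ᶜ) ⟨rfl, hsE⟩
        rcases v with t | U
        · obtain ⟨-, ht⟩ : (g, false).2 = false ∧ t ∈ (MuForm.mng M A h)ᶜ := hrv
          apply ht
          rw [← ihe]; exact hv
        · exact absurd hrv (by simp [simK])
      · rintro hns (t | U) hru
        · exact absurd hru (by simp [simK])
        · obtain ⟨-, hsE⟩ : (g, true).2 = true ∧ s ∈ M.E (g, true).1 U := hru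
          by_cases hUsub : U ⊆ (MuForm.mng M A h)ᶜ
          · exact absurd (M.mono g hUsub hsE) hns
          · obtain ⟨t, htU, htA⟩ : ∃ t, t ∈ U ∧ t ∈ MuForm.mng M A h := by
              rw [Set.not_subset] at hUsub
              obtain ⟨t, ht1, ht2⟩ := hUsub
              exact ⟨t, ht1, by simpa using ht2⟩
            exact ⟨Sum.inl t, ⟨rfl, htU⟩, by rw [← ihe] at htA; exact htA⟩
  | mu x A ih =>
      intro h h' hh
      simp only [ttr, Mu2.mng, MuForm.mng]
      set F : Set M.S → Set M.S := fun Y => MuForm.mng M A (Function.update h x Y) with hF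
      set F' : Set (simK M).W → Set (simK M).W :=
        fun X => Mu2.mng (simK M) (ttr A) (Function.update h' x X) with hF'
      have hcomm : ∀ X, Sum.inl ⁻¹' (F' X) = F (Sum.inl ⁻¹' X) := by
        intro X
        apply ih
        intro y
        by_cases hy : y = x
        · subst hy; simp
        · simp [Function.update_of_ne hy]; exact hh y
      have hmono : Monotone F' := by
        intro X X' hXX
        apply Mu2.mng_mono
        intro y
        by_cases hy : y = x
        · subst hy; simpa using hXX
        · simp [Function.update_of_ne hy]
      apply subset_antisymm
      · apply le_lfpSet
        intro Y hY
        set X : Set (simK M).W := (Sum.inl '' Yᶜ)ᶜ with hX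
        have hpre : Sum.inl ⁻¹' X = Y := by
          ext s
          constructor
          · intro hs
            by_contra hn
            exact hs ⟨s, hn, rfl⟩
          · rintro hs ⟨t, ht, hte⟩
            cases Sum.inl_injective hte
            exact ht hs
        have hFX : F' X ⊆ X := by
          rintro (s | U) hw
          · have : s ∈ F Y := by rw [← hpre, ← hcomm]; exact hw
            simp only [hX, Set.mem_compl_iff, Set.mem_image]
            rintro ⟨t, htY, hte⟩
            cases Sum.inl_injective hte
            exact htY (hY this)
          · rintro ⟨t, -, hte⟩
            cases hte
        have : lfpSet F' ⊆ X := lfpSet_le hFX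
        rw [← hpre]
        exact Set.preimage_mono this
      · apply lfpSet_le
        rw [← hcomm]
        exact Set.preimage_mono (lfpSet_prefix hmono)
  | nu x A ih =>
      intro h h' hh
      simp only [ttr, Mu2.mng, MuForm.mng]
      set F : Set M.S → Set M.S := fun Y => MuForm.mng M A (Function.update h x Y) with hF
      set F' : Set (simK M).W → Set (simK M).W :=
        fun X => Mu2.mng (simK M) (ttr A) (Function.update h' x X) with hF'
      have hcomm : ∀ X, Sum.inl ⁻¹' (F' X) = F (Sum.inl ⁻¹' X) := by
        intro X
        apply ih
        intro y
        by_cases hy : y = x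
        · subst hy; simp
        · simp [Function.update_of_ne hy]; exact hh y
      have hmono : Monotone F' := by
        intro X X' hXX
        apply Mu2.mng_mono
        intro y
        by_cases hy : y = x
        · subst hy; simpa using hXX
        · simp [Function.update_of_ne hy]
      apply subset_antisymm
      · apply le_gfpSet
        rw [← hcomm]
        exact Set.preimage_mono (gfpSet_postfix hmono)
      · apply gfpSet_le
        intro Y hY
        set X : Set (simK M).W := Sum.inl '' Y with hX
        have hpre : Sum.inl ⁻¹' X = Y := Set.preimage_image_eq _ Sum.inl_injective
        have hXF : X ⊆ F' X := by
          rintro w ⟨s, hsY, rfl⟩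
          have : s ∈ F Y := hY hsY
          rw [← hpre, ← hcomm] at this
          exact this
        have : X ⊆ gfpSet F' := le_gfpSet hXF
        intro s hs
        exact Set.preimage_mono this ⟨s, hs, rfl⟩

/-- The game model obtained from a Kripke model. -/
def simG (K : Kripke) : GameModel where
  S := K.W
  E := fun g X => {w | ∃ u, K.R (g, true) w u ∧ ∀ v, K.R (g, false) u v → v ∈ X}
  mono := by
    intro g X Y hXY w hw
    obtain ⟨u, hru, hu⟩ := hw
    exact ⟨u, hru, fun v hv => hXY (hu v hv)⟩
  V := K.V

lemma simG_mng (K : Kripke) (A : MuForm ℕ) :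
    ∀ h : ℕ → Set K.W, MuForm.mng (simG K) A h = Mu2.mng K (ttr A) h := by
  induction A with
  | atom p => intro h; rfl
  | natom p => intro h; rfl
  | var x => intro h; rfl
  | or A B ihA ihB => intro h; simp only [ttr, Mu2.mng, MuForm.mng, ihA, ihB]; rfl
  | and A B ihA ihB => intro h; simp only [ttr, Mu2.mng, MuForm.mng, ihA, ihB]; rfl
  | dia g A ih =>
      intro h
      simp only [ttr, Mu2.mng, MuForm.mng, ih]
      rfl
  | box g A ih =>
      intro h
      simp only [ttr, Mu2.mng, MuForm.mng, ih]
      ext w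
      simp only [simG, Set.mem_compl_iff, Set.mem_setOf_eq]
      show (¬ ∃ u, K.R (g, true) w u ∧ ∀ v, K.R (g, false) u v → v ∈ (Mu2.mng K (ttr A) h)ᶜ) ↔
        ∀ u, K.R (g, true) w u → ∃ v, K.R (g, false) u v ∧ v ∈ Mu2.mng K (ttr A) h
      push_neg
      constructor
      · intro hw u hru
        obtain ⟨v, hrv, hv⟩ := hw u hru
        exact ⟨v, hrv, by simpa using hv⟩
      · intro hw u hru
        obtain ⟨v, hrv, hv⟩ := hw u hru
        exact ⟨v, hrv, by simpa using hv⟩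
  | mu x A ih =>
      intro h
      simp only [ttr, Mu2.mng, MuForm.mng]
      exact congrArg _ (funext fun X => ih _)
  | nu x A ih =>
      intro h
      simp only [ttr, Mu2.mng, MuForm.mng]
      exact congrArg _ (funext fun X => ih _)

/-- The simulation translation `(-)^t` from the monotone
    μ-calculus into the normal bimodal μ-calculus preserves satisfiability and
    validity: for every sentence `C`, (1) if `C` is satisfiable in some game
    model then `C^t` is satisfiable in some Kripke model, and (2) if `C` is
    valid over all game models then `C^t` is valid over all Kripke models. -/
theorem t_preserves_sat_and_validity (C : MuForm ℕ) (hsen : MuForm.FV C = ∅) :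
    ((∃ (M : GameModel) (h : ℕ → Set M.S), (MuForm.mng M C h).Nonempty) →
      ∃ (K : Kripke) (h : ℕ → Set K.W), (Mu2.mng K (ttr C) h).Nonempty) ∧
    ((∀ (M : GameModel) (h : ℕ → Set M.S), MuForm.mng M C h = Set.univ) →
      ∀ (K : Kripke) (h : ℕ → Set K.W), Mu2.mng K (ttr C) h = Set.univ) := by
  constructor
  · rintro ⟨M, h, s, hs⟩
    refine ⟨simK M, fun x => Sum.inl '' h x, Sum.inl s, ?_⟩
    have := sim_mng M C h (fun x => Sum.inl '' h x)
      (fun x => Set.preimage_image_eq _ Sum.inl_injective)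
    have hmem : s ∈ Sum.inl ⁻¹' (Mu2.mng (simK M) (ttr C) (fun x => Sum.inl '' h x)) := by
      rw [this]; exact hs
    exact hmem
  · intro hval K h
    rw [← simG_mng K C h]
    exact hval (simG K) h
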